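/- arXiv:1401.3150 — 3 statements merged into one kernel-verified Lean document; each statement's English description precedes it below -/
import Mathlib

section
/- Let p > 3 be a prime and let a, b be integers with 0 ≤ a < b. Let m₁, m₂, m₃ be integers, and let ξ, η be integers with 1 ≤ ξ ≤ p^a, 1 ≤ η ≤ p^b, and, in the case a ≥ 1, η ≢ ξ (mod p). Then the number of integers z with 1 ≤ z ≤ p^{3b} satisfying (z − η)^j ≡ m_j (mod p^{jb}) for j = 1, 2, 3, and satisfying z ≡ ξ (mod p^a) when a ≥ 1, respectively z ≢ η (mod p) when a = 0, is at most 6. (This is the bound B_{a,b}^{1,3}(p) ≤ 6.) -/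
/-- The bound `B_{a,b}^{1,3}(p) ≤ 6`: for a prime `p > 3`, integers `0 ≤ a < b`,
integers `m₁, m₂, m₃`, and integers `ξ, η` with `1 ≤ ξ ≤ p^a`, `1 ≤ η ≤ p^b` and
(when `a ≥ 1`) `η ≢ ξ (mod p)`, the number of integers `z` with `1 ≤ z ≤ p^{3b}`
satisfying `(z-η)^j ≡ m_j (mod p^{jb})` for `j = 1,2,3`, together with
`z ≡ ξ (mod p^a)` when `a ≥ 1`, respectively `z ≢ η (mod p)` when `a = 0`,
is at most `6`. -/
theorem congruence_count_one_variable (p : ℕ) (hp : p.Prime) (hp3 : 3 < p)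
    (a b : ℕ) (hab : a < b) (m : Fin 3 → ℤ) (ξ η : ℤ)
    (hξ1 : 1 ≤ ξ) (hξ2 : ξ ≤ (p : ℤ) ^ a)
    (hη1 : 1 ≤ η) (hη2 : η ≤ (p : ℤ) ^ b)
    (hne : 1 ≤ a → ¬ η ≡ ξ [ZMOD (p : ℤ)]) :
    Set.ncard {z : ℤ | 1 ≤ z ∧ z ≤ (p : ℤ) ^ (3 * b) ∧
      (∀ j : Fin 3, (z - η) ^ ((j : ℕ) + 1) ≡ m j [ZMOD (p : ℤ) ^ (((j : ℕ) + 1) * b)]) ∧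
      (if 1 ≤ a then z ≡ ξ [ZMOD (p : ℤ) ^ a] else ¬ z ≡ η [ZMOD (p : ℤ)])} ≤ 6 := by
  set S := {z : ℤ | 1 ≤ z ∧ z ≤ (p : ℤ) ^ (3 * b) ∧
      (∀ j : Fin 3, (z - η) ^ ((j : ℕ) + 1) ≡ m j [ZMOD (p : ℤ) ^ (((j : ℕ) + 1) * b)]) ∧
      (if 1 ≤ a then z ≡ ξ [ZMOD (p : ℤ) ^ a] else ¬ z ≡ η [ZMOD (p : ℤ)])} with hS
  have hpz : Prime (p : ℤ) := Nat.prime_iff_prime_int.mp hp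
  -- every element has z - η not divisible by p
  have hndvd : ∀ z ∈ S, ¬ (p:ℤ) ∣ z - η := by
    intro z hz hdvd
    have hzη : z ≡ η [ZMOD (p:ℤ)] := (Int.modEq_iff_dvd.mpr (by simpa using hdvd)).symm
    obtain ⟨-, -, -, hcond⟩ := hz
    by_cases ha : 1 ≤ a
    · rw [if_pos ha] at hcond
      have h1 : (p:ℤ) ∣ (p:ℤ)^a := dvd_pow_self _ (by omega)
      exact hne ha ((hzη.symm).trans (hcond.of_dvd h1))
    · rw [if_neg ha] at hcond
      exact hcond hzη
  have hsub : S.Subsingleton := by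
    intro z₁ hz₁ z₂ hz₂
    have hpx : ¬ (p:ℤ) ∣ z₁ - η := hndvd z₁ hz₁
    obtain ⟨hz₁1, hz₁2, hcong₁, -⟩ := hz₁
    obtain ⟨hz₂1, hz₂2, hcong₂, -⟩ := hz₂
    -- from j = 0 : p^b ∣ z₂ - z₁, hence p ∣ z₂ - z₁
    have h0 : (p:ℤ)^b ∣ z₂ - z₁ := by
      have h1 := ((hcong₁ 0).trans (hcong₂ 0).symm).dvd
      simpa using h1
    have hp0 : (p:ℤ) ∣ z₂ - z₁ :=
      dvd_trans (dvd_pow_self _ (by omega : b ≠ 0)) h0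
    -- from j = 2 : p^(3b) ∣ (z₂-η)^3 - (z₁-η)^3
    have h2 : (p:ℤ)^(3*b) ∣ (z₂-η)^3 - (z₁-η)^3 := by
      have h1 := ((hcong₁ 2).trans (hcong₂ 2).symm).dvd
      simpa using h1
    -- p does not divide the quadratic factor
    have hpS : ¬ (p:ℤ) ∣ (z₁-η)^2 + (z₁-η)*(z₂-η) + (z₂-η)^2 := by
      intro hdvd
      have h3 : (p:ℤ) ∣ 3*(z₁-η)^2 := by
        have he : (3:ℤ)*(z₁-η)^2 =
            ((z₁-η)^2 + (z₁-η)*(z₂-η) + (z₂-η)^2) - (z₂ - z₁)*((z₁-η) + ((z₂-η) + (z₁-η))) := by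
          ring
        rw [he]
        exact dvd_sub hdvd (hp0.mul_right _)
      rcases hpz.dvd_mul.mp h3 with h | h
      · have : (p:ℤ) ≤ 3 := Int.le_of_dvd (by norm_num) h
        omega
      · exact hpx (hpz.dvd_of_dvd_pow h)
    have hcop : IsCoprime ((p:ℤ)^(3*b)) ((z₁-η)^2 + (z₁-η)*(z₂-η) + (z₂-η)^2) :=
      ((hpz.coprime_iff_not_dvd).mpr hpS).pow_left
    have hdvd3 : (p:ℤ)^(3*b) ∣ z₂ - z₁ := by
      refine hcop.dvd_of_dvd_mul_right ?_
      have he : (z₂ - z₁) * ((z₁-η)^2 + (z₁-η)*(z₂-η) + (z₂-η)^2)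
          = (z₂-η)^3 - (z₁-η)^3 := by ring
      rw [he]; exact h2
    have habs : |z₂ - z₁| < (p:ℤ)^(3*b) := by
      rw [abs_lt]; omega
    have := Int.eq_zero_of_abs_lt_dvd hdvd3 habs
    omega
  calc S.ncard ≤ 1 := (Set.ncard_le_one hsub.finite).mpr (fun a ha b hb => hsub ha hb)
    _ ≤ 6 := by omega
end

section
/- Let p > 3 be a prime, let Δ be a real number with 0 < Δ < 1/12, and let a, b, h be integers with 0 ≤ a < b and 2b − a ≤ h ≤ 2b − a + Δ(b − a). Let m₁, m₂, m₃ be integers, and let ξ, η be integers with 1 ≤ ξ ≤ p^a, 1 ≤ η ≤ p^b, and, in the case a ≥ 1, η ≢ ξ (mod p). Consider the pairs (z₁, z₂) of integers with 1 ≤ z₁, z₂ ≤ p^{3b} satisfying (z₁ − η)^j + (z₂ − η)^j ≡ m_j (mod p^{jb}) for j = 1, 2, 3, and in addition: when a ≥ 1, z₁ ≡ z₂ ≡ ξ (mod p^a) and z₁ ≢ z₂ (mod p^{a+1}); when a = 0, z₁ ≢ z₂ (mod p) and z_i ≢ η (mod p) for i = 1, 2. Count two such pairs (z₁,z₂) and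 (w₁,w₂) as equivalent when z₁ ≡ w₁ and z₂ ≡ w₂ (mod p^h). Then the number of equivalence classes of such pairs is at most 6 p^{h − 2b + a}. (This is the bound B_{a,b}^{2,h/b}(p) ≤ 6 p^{h−2b+a}.) -/
/-- Cancel a factor coprime to the prime `p` from a `p`-power divisibility. -/
lemma aux_pow_prime_dvd_cancel {p : ℤ} (hp : Prime p) {H : ℤ} (hH : ¬ p ∣ H) :
    ∀ (N : ℕ) (x : ℤ), p ^ N ∣ x * H → p ^ N ∣ x := by
  intro N
  induction N with
  | zero => intro x _; simpa using one_dvd x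
  | succ n ih =>
    intro x hx
    have h1 : p ^ n ∣ x := ih x (dvd_trans (pow_dvd_pow p n.le_succ) hx)
    obtain ⟨y, rfl⟩ := h1
    rw [pow_succ] at hx ⊢
    rw [mul_assoc] at hx
    have h2 : p ∣ y * H :=
      (mul_dvd_mul_iff_left (pow_ne_zero n hp.ne_zero)).mp hx
    exact mul_dvd_mul_left _ ((hp.dvd_mul.mp h2).resolve_right hH)

/-- If two integers agree modulo `P^f` and the `e` further `P`-adic digits of their
residues mod `P^(f+e)` agree, then they agree modulo `P^(f+e)`. -/
lemma aux_digits {P : ℤ} (hP : 1 < P) {e f : ℕ} {x y : ℤ}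
    (hlow : P ^ f ∣ x - y)
    (hq : (P : ℤ) ^ e ∣ (x % P ^ (f + e)) / P ^ f - (y % P ^ (f + e)) / P ^ f) :
    P ^ (f + e) ∣ x - y := by
  have hP0 : (0:ℤ) < P := lt_trans one_pos hP
  have hPf : (0:ℤ) < P ^ f := pow_pos hP0 f
  have hPfe : (0:ℤ) < P ^ (f + e) := pow_pos hP0 _
  set A := x % P ^ (f + e) with hA
  set A' := y % P ^ (f + e) with hA'
  have hAx : P ^ (f + e) ∣ x - A := by
    rw [hA, Int.emod_def]; exact ⟨x / P ^ (f+e), by ring⟩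
  have hAy : P ^ (f + e) ∣ y - A' := by
    rw [hA', Int.emod_def]; exact ⟨y / P ^ (f+e), by ring⟩
  -- low digits of A and A' agree
  have hdvd_f_fe : P ^ f ∣ P ^ (f + e) := pow_dvd_pow P (Nat.le_add_right f e)
  have hlowA : P ^ f ∣ A - A' := by
    have h1 : P ^ f ∣ x - A := dvd_trans hdvd_f_fe hAx
    have h2 : P ^ f ∣ y - A' := dvd_trans hdvd_f_fe hAy
    have : A - A' = (x - y) - (x - A) + (y - A') := by ring
    rw [this]
    exact dvd_add (dvd_sub hlow h1) h2
  -- bounds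
  have hA0 : 0 ≤ A := Int.emod_nonneg x hPfe.ne'
  have hA1 : A < P ^ (f + e) := Int.emod_lt_of_pos x hPfe
  have hA'0 : 0 ≤ A' := Int.emod_nonneg y hPfe.ne'
  have hA'1 : A' < P ^ (f + e) := Int.emod_lt_of_pos y hPfe
  -- digit decomposition
  have hdec : P ^ f * (A / P ^ f) + A % P ^ f = A := Int.mul_ediv_add_emod A (P ^ f)
  have hdec' : P ^ f * (A' / P ^ f) + A' % P ^ f = A' := Int.mul_ediv_add_emod A' (P ^ f)
  have hrem : A % P ^ f = A' % P ^ f := Int.ModEq.symm (Int.modEq_iff_dvd.mpr hlowA)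
  -- bound on quotients
  have hqb : ∀ B : ℤ, 0 ≤ B → B < P ^ (f + e) → 0 ≤ B / P ^ f ∧ B / P ^ f < P ^ e := by
    intro B hB0 hB1
    constructor
    · exact Int.ediv_nonneg hB0 hPf.le
    · by_contra hcon
      push_neg at hcon
      have h1 : P ^ f * P ^ e ≤ P ^ f * (B / P ^ f) :=
        mul_le_mul_of_nonneg_left hcon hPf.le
      have h2 : (0:ℤ) ≤ B % P ^ f := Int.emod_nonneg B hPf.ne'
      have h3 : P ^ f * (B / P ^ f) + B % P ^ f = B := Int.mul_ediv_add_emod B (P ^ f)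
      have : P ^ (f + e) ≤ B := by
        rw [pow_add]
        omega
      omega
  obtain ⟨hq0, hq1⟩ := hqb A hA0 hA1
  obtain ⟨hq0', hq1'⟩ := hqb A' hA'0 hA'1
  have hqeq : A / P ^ f = A' / P ^ f := by
    have habs : |A / P ^ f - A' / P ^ f| < P ^ e := by
      rw [abs_lt]; omega
    have := Int.eq_zero_of_abs_lt_dvd hq habs
    omega
  have hmul : P ^ f * (A / P ^ f) = P ^ f * (A' / P ^ f) := by rw [hqeq]
  have hAA' : A = A' := by omega
  have : P ^ (f + e) ∣ (x - A) - (y - A') := dvd_sub hAx hAy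
  have heq : (x - A) - (y - A') = x - y - (A - A') := by ring
  rw [heq, hAA'] at this
  simpa using this

/-- From divisibility and both residues in `[0, n)`, conclude equality. -/
lemma aux_eq_of_dvd {n x y : ℤ} (hd : n ∣ x - y) (hx0 : 0 ≤ x) (hx1 : x < n)
    (hy0 : 0 ≤ y) (hy1 : y < n) : x = y := by
  have := Int.eq_zero_of_abs_lt_dvd hd (by rw [abs_lt]; omega)
  omega

/-- Rigidity for the cubic `F(s) = 2s³ - 6m₁s + 4m₂`: two roots mod `P^T` of the cubic
that are congruent mod `P`, at which the derivative is a unit, agree mod `P^T`. -/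
lemma aux_srig {P : ℤ} (hP : Prime P) (hp6 : ¬ P ∣ 6) {m1 m2 : ℤ} {T : ℕ}
    {s s' : ℤ}
    (hFs : P ^ T ∣ 2*s^3 - 6*m1*s + 4*m2) (hFs' : P ^ T ∣ 2*s'^3 - 6*m1*s' + 4*m2)
    (hder : ¬ P ∣ (s^2 - m1)) (hss : P ∣ s - s') : P ^ T ∣ s - s' := by
  have hdiff : P ^ T ∣ (s - s') * (2*(s^2+s*s'+s'^2) - 6*m1) := by
    have hsub := dvd_sub hFs hFs'
    have hid : 2*s^3 - 6*m1*s + 4*m2 - (2*s'^3 - 6*m1*s' + 4*m2)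
        = (s - s') * (2*(s^2+s*s'+s'^2) - 6*m1) := by ring
    rwa [hid] at hsub
  refine aux_pow_prime_dvd_cancel hP ?_ T _ hdiff
  intro hH
  have h2 : P ∣ 6*(s^2 - m1) := by
    have hid : 6*(s^2-m1) = (2*(s^2+s*s'+s'^2) - 6*m1) - (s'-s)*(2*s'+4*s) := by ring
    rw [hid]
    exact dvd_sub hH (((dvd_sub_comm).mp hss).mul_right _)
  rcases hP.dvd_mul.mp h2 with h6 | hsm
  exacts [hp6 h6, hder hsm]

/-- Rigidity for square roots at exact valuation `a`. -/
lemma aux_drig {P : ℤ} (hP : Prime P) (hp2 : ¬ P ∣ 2) {N a : ℕ} (haN : 2*a ≤ N)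
    {d d' u u' : ℤ} (hdu : d = P^a * u) (hdu' : d' = P^a * u')
    (hu : ¬ P ∣ u)
    (hsq : P ^ N ∣ d^2 - d'^2) (hlow : P ^ (a+1) ∣ d - d') :
    P ^ (N - a) ∣ d - d' := by
  have hPa : (P:ℤ)^a ≠ 0 := pow_ne_zero _ hP.ne_zero
  have h1 : P ^ (N - 2*a) ∣ (u - u') * (u + u') := by
    have hid : d^2 - d'^2 = P^(2*a) * ((u-u')*(u+u')) := by rw [hdu, hdu']; ring
    rw [hid] at hsq
    have hsplit : (P:ℤ)^N = P^(2*a) * P^(N-2*a) := by rw [← pow_add]; congr 1; omega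
    rw [hsplit] at hsq
    exact (mul_dvd_mul_iff_left (pow_ne_zero _ hP.ne_zero)).mp hsq
  have h2 : P ∣ u - u' := by
    have hid : d - d' = P^a * (u - u') := by rw [hdu, hdu']; ring
    rw [hid, pow_succ] at hlow
    exact (mul_dvd_mul_iff_left hPa).mp hlow
  have h3 : ¬ P ∣ u + u' := by
    intro hc
    have h2u : P ∣ 2*u := by
      have hid : 2*u = (u-u') + (u+u') := by ring
      rw [hid]; exact dvd_add h2 hc
    rcases hP.dvd_mul.mp h2u with hcon | hcon
    exacts [hp2 hcon, hu hcon]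
  have h4 : P ^ (N-2*a) ∣ u - u' := aux_pow_prime_dvd_cancel hP h3 _ _ h1
  have hid : d - d' = P^a * (u - u') := by rw [hdu, hdu']; ring
  rw [hid]
  have hsplit : (P:ℤ)^(N-a) = P^a * P^(N-2*a) := by rw [← pow_add]; congr 1; omega
  rw [hsplit]
  exact mul_dvd_mul_left _ h4

/-- The bound `B_{a,b}^{2,h/b}(p) ≤ 6 p^{h-2b+a}`: for a prime `p > 3`, a real
`0 < Δ < 1/12`, integers `0 ≤ a < b` and `h` with `2b - a ≤ h ≤ 2b - a + Δ(b-a)`,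
integers `m₁, m₂, m₃`, and integers `ξ, η` with `1 ≤ ξ ≤ p^a`, `1 ≤ η ≤ p^b` and
(when `a ≥ 1`) `η ≢ ξ (mod p)`, the number of equivalence classes modulo `p^h`
(componentwise) of pairs `(z₁, z₂)` with `1 ≤ z₁, z₂ ≤ p^{3b}` satisfying
`(z₁-η)^j + (z₂-η)^j ≡ m_j (mod p^{jb})` for `j = 1,2,3`, together with
`z₁ ≡ z₂ ≡ ξ (mod p^a)` and `z₁ ≢ z₂ (mod p^{a+1})` when `a ≥ 1`, respectively
`z₁ ≢ z₂ (mod p)` and `z_i ≢ η (mod p)` when `a = 0`, is at most `6 p^{h-2b+a}`.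
Equivalence classes are counted via the image under reduction modulo `p^h`. -/
theorem congruence_count_two_variables (p : ℕ) (hp : p.Prime) (hp3 : 3 < p)
    (Δ : ℝ) (hΔ0 : 0 < Δ) (hΔ : Δ < 1 / 12)
    (a b h : ℕ) (hab : a < b) (hh1 : 2 * b ≤ h + a)
    (hh2 : (h : ℝ) ≤ 2 * (b : ℝ) - (a : ℝ) + Δ * ((b : ℝ) - (a : ℝ)))
    (m : Fin 3 → ℤ) (ξ η : ℤ)
    (hξ1 : 1 ≤ ξ) (hξ2 : ξ ≤ (p : ℤ) ^ a)
    (hη1 : 1 ≤ η) (hη2 : η ≤ (p : ℤ) ^ b)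
    (hne : 1 ≤ a → ¬ η ≡ ξ [ZMOD (p : ℤ)]) :
    Set.ncard ((fun z : ℤ × ℤ => (z.1 % (p : ℤ) ^ h, z.2 % (p : ℤ) ^ h)) ''
      {z : ℤ × ℤ | 1 ≤ z.1 ∧ z.1 ≤ (p : ℤ) ^ (3 * b) ∧ 1 ≤ z.2 ∧ z.2 ≤ (p : ℤ) ^ (3 * b) ∧
        (∀ j : Fin 3, (z.1 - η) ^ ((j : ℕ) + 1) + (z.2 - η) ^ ((j : ℕ) + 1) ≡ m j
          [ZMOD (p : ℤ) ^ (((j : ℕ) + 1) * b)]) ∧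
        (if 1 ≤ a then
          z.1 ≡ ξ [ZMOD (p : ℤ) ^ a] ∧ z.2 ≡ ξ [ZMOD (p : ℤ) ^ a] ∧
            ¬ z.1 ≡ z.2 [ZMOD (p : ℤ) ^ (a + 1)]
        else
          ¬ z.1 ≡ z.2 [ZMOD (p : ℤ)] ∧ ¬ z.1 ≡ η [ZMOD (p : ℤ)] ∧
            ¬ z.2 ≡ η [ZMOD (p : ℤ)])}) ≤ 6 * p ^ (h + a - 2 * b) := by
  classical
  haveI hfact : Fact p.Prime := ⟨hp⟩
  haveI : NeZero p := ⟨hp.pos.ne'⟩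
  have hP : Prime ((p : ℕ) : ℤ) := Nat.prime_iff_prime_int.mp hp
  set S : Set (ℤ × ℤ) :=
      {z : ℤ × ℤ | 1 ≤ z.1 ∧ z.1 ≤ (p : ℤ) ^ (3 * b) ∧ 1 ≤ z.2 ∧ z.2 ≤ (p : ℤ) ^ (3 * b) ∧
        (∀ j : Fin 3, (z.1 - η) ^ ((j : ℕ) + 1) + (z.2 - η) ^ ((j : ℕ) + 1) ≡ m j
          [ZMOD (p : ℤ) ^ (((j : ℕ) + 1) * b)]) ∧
        (if 1 ≤ a then
          z.1 ≡ ξ [ZMOD (p : ℤ) ^ a] ∧ z.2 ≡ ξ [ZMOD (p : ℤ) ^ a] ∧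
            ¬ z.1 ≡ z.2 [ZMOD (p : ℤ) ^ (a + 1)]
        else
          ¬ z.1 ≡ z.2 [ZMOD (p : ℤ)] ∧ ¬ z.1 ≡ η [ZMOD (p : ℤ)] ∧
            ¬ z.2 ≡ η [ZMOD (p : ℤ)])} with hSdef
  set P : ℤ := (p : ℤ) with hPdef
  have hP1 : (1:ℤ) < P := by rw [hPdef]; exact_mod_cast hp.one_lt
  have hP0 : (0:ℤ) < P := by linarith
  have hP4 : (4:ℤ) ≤ P := by rw [hPdef]; exact_mod_cast hp3
  have hp2 : ¬ P ∣ 2 := fun hd => by have := Int.le_of_dvd (by norm_num) hd; omega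
  have hp3' : ¬ P ∣ 3 := fun hd => by have := Int.le_of_dvd (by norm_num) hd; omega
  have hp6 : ¬ P ∣ 6 := by
    intro hd
    rcases hP.dvd_mul.mp (show P ∣ 2 * 3 by norm_num at hd ⊢; exact hd) with hc | hc
    exacts [hp2 hc, hp3' hc]
  have hp4 : ¬ P ∣ 4 := by
    intro hd
    rcases hP.dvd_mul.mp (show P ∣ 2 * 2 by norm_num at hd ⊢; exact hd) with hc | hc
    exacts [hp2 hc, hp2 hc]
  -- numeric facts
  set k : ℕ := h + a - 2 * b with hkdef
  have hb1 : 1 ≤ b := by omega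
  have hkba : k < b - a := by
    have hcast : (k : ℝ) ≤ Δ * ((b:ℝ) - (a:ℝ)) := by
      have h1 : (k : ℝ) = (h:ℝ) + (a:ℝ) - 2*(b:ℝ) := by
        rw [hkdef]
        push_cast [Nat.cast_sub hh1]
        ring
      linarith
    have hba : (0:ℝ) < (b:ℝ) - (a:ℝ) := by
      have : (a:ℝ) < (b:ℝ) := by exact_mod_cast hab
      linarith
    have hfin : (k : ℝ) < ((b - a : ℕ) : ℝ) := by
      rw [Nat.cast_sub hab.le]
      nlinarith
    exact_mod_cast hfin
  have hh3b : h < 3 * b := by omega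
  have hh1' : 1 ≤ h := by omega
  have hha : a + 1 ≤ h := by omega
  -- the bundle of per-solution facts
  have hsol : ∀ z ∈ S, ¬ P ∣ (z.1 - η) ∧ ¬ P ∣ (z.2 - η) ∧
      P ^ a ∣ (z.1 - z.2) ∧ ¬ P ^ (a+1) ∣ (z.1 - z.2) ∧
      P ^ b ∣ ((z.1 + z.2 - 2*η) - m 0) ∧
      P ^ (2*b) ∣ ((z.1+z.2-2*η)^2 + (z.1-z.2)^2 - 2 * m 1) ∧
      P ^ (3*b) ∣ ((z.1+z.2-2*η)^3 + 3*(z.1+z.2-2*η)*(z.1-z.2)^2 - 4 * m 2) := by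
    intro z hz
    have hz' : z ∈ S := hz
    rw [hSdef, Set.mem_setOf_eq] at hz'
    obtain ⟨hz1, hz2, hz3, hz4, hcong, hcase⟩ := hz'
    have E1 := hcong 0
    have E2 := hcong 1
    have E3 := hcong 2
    norm_num at E1 E2 E3
    have hE1d : P ^ b ∣ z.1 + z.2 - 2*η - m 0 := by
      have hd := E1.symm.dvd
      have hid : z.1 + z.2 - 2*η - m 0 = (z.1 - η + (z.2 - η)) - m 0 := by ring
      rwa [hid]
    have hE2d : P ^ (2*b) ∣ (z.1+z.2-2*η)^2 + (z.1-z.2)^2 - 2 * m 1 := by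
      have hd := (E2.symm.dvd).mul_left 2
      have hid : (z.1+z.2-2*η)^2 + (z.1-z.2)^2 - 2 * m 1
          = 2 * ((z.1 - η)^2 + (z.2 - η)^2 - m 1) := by ring
      rw [hid]
      exact hd
    have hE3d : P ^ (3*b) ∣ (z.1+z.2-2*η)^3 + 3*(z.1+z.2-2*η)*(z.1-z.2)^2 - 4 * m 2 := by
      have hd := (E3.symm.dvd).mul_left 4
      have hid : (z.1+z.2-2*η)^3 + 3*(z.1+z.2-2*η)*(z.1-z.2)^2 - 4 * m 2
          = 4 * ((z.1 - η)^3 + (z.2 - η)^3 - m 2) := by ring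
      rw [hid]
      exact hd
    by_cases ha : 1 ≤ a
    · rw [if_pos ha] at hcase
      obtain ⟨hc1, hc2, hc3⟩ := hcase
      have hPa : P ∣ P ^ a := dvd_pow_self P (by omega : a ≠ 0)
      have hz1ξ : P ^ a ∣ z.1 - ξ := hc1.symm.dvd
      have hz2ξ : P ^ a ∣ z.2 - ξ := hc2.symm.dvd
      have hx : ¬ P ∣ z.1 - η := by
        intro hcon
        apply hne ha
        rw [Int.modEq_iff_dvd]
        have hid : ξ - η = (z.1 - η) - (z.1 - ξ) := by ring
        rw [hid]
        exact dvd_sub hcon (dvd_trans hPa hz1ξ)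
      have hy : ¬ P ∣ z.2 - η := by
        intro hcon
        apply hne ha
        rw [Int.modEq_iff_dvd]
        have hid : ξ - η = (z.2 - η) - (z.2 - ξ) := by ring
        rw [hid]
        exact dvd_sub hcon (dvd_trans hPa hz2ξ)
      have hdd : P ^ a ∣ z.1 - z.2 := by
        have hid : z.1 - z.2 = (z.1 - ξ) - (z.2 - ξ) := by ring
        rw [hid]
        exact dvd_sub hz1ξ hz2ξ
      have hdne : ¬ P ^ (a+1) ∣ z.1 - z.2 := by
        intro hcon
        apply hc3
        rw [Int.modEq_iff_dvd]
        have hid : z.2 - z.1 = -(z.1 - z.2) := by ring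
        rw [hid]
        exact dvd_neg.mpr hcon
      exact ⟨hx, hy, hdd, hdne, hE1d, hE2d, hE3d⟩
    · have ha0 : a = 0 := by omega
      rw [if_neg ha] at hcase
      obtain ⟨hd12, hd1η, hd2η⟩ := hcase
      have hx : ¬ P ∣ z.1 - η := by
        intro hcon
        apply hd1η
        rw [Int.modEq_iff_dvd]
        have hid : η - z.1 = -(z.1 - η) := by ring
        rw [hid]
        exact dvd_neg.mpr hcon
      have hy : ¬ P ∣ z.2 - η := by
        intro hcon
        apply hd2η
        rw [Int.modEq_iff_dvd]
        have hid : η - z.2 = -(z.2 - η) := by ring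
        rw [hid]
        exact dvd_neg.mpr hcon
      have hdd : P ^ a ∣ z.1 - z.2 := by rw [ha0, pow_zero]; exact one_dvd _
      have hdne : ¬ P ^ (a+1) ∣ z.1 - z.2 := by
        rw [ha0, zero_add, pow_one]
        intro hcon
        apply hd12
        rw [Int.modEq_iff_dvd]
        have hid : z.2 - z.1 = -(z.1 - z.2) := by ring
        rw [hid]
        exact dvd_neg.mpr hcon
      exact ⟨hx, hy, hdd, hdne, hE1d, hE2d, hE3d⟩
  -- trivial case: empty solution set
  rcases S.eq_empty_or_nonempty with hSe | ⟨z₀, hz₀⟩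
  · rw [hSe, Set.image_empty]
    simp
  obtain ⟨hx₀, hy₀, hd₀, hd₀', hE1₀, hE2₀, hE3₀⟩ := hsol z₀ hz₀
  set s₀ : ℤ := z₀.1 + z₀.2 - 2*η with hs₀def
  have hval_dvd : ∀ (n : ℕ) (x : ℤ), (P ^ n ∣ x ↔ x = 0 ∨ n ≤ padicValInt p x) := by
    intro n x
    rw [hPdef]
    exact padicValInt_dvd_iff n x
  set c' : ℕ := if P ^ b ∣ s₀ then b else padicValInt p s₀ with hc'def
  have hc'b : c' ≤ b := by
    rw [hc'def]
    split_ifs with hdvd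
    · exact le_refl b
    · by_contra hcon
      push_neg at hcon
      exact hdvd ((hval_dvd b s₀).mpr (Or.inr (le_of_lt hcon)))
  have hc'dvd : P ^ c' ∣ s₀ := by
    rw [hc'def]
    split_ifs with hdvd
    · exact hdvd
    · exact (hval_dvd _ s₀).mpr (Or.inr le_rfl)
  have hc'exact : c' < b → ¬ P ^ (c'+1) ∣ s₀ := by
    intro hlt hcon
    rw [hc'def] at hlt hcon
    split_ifs at hlt hcon with hdvd
    · omega
    · rcases (hval_dvd _ _).mp hcon with h0 | hle
      · exact hdvd (h0 ▸ dvd_zero _)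
      · omega
  have hsS : ∀ z ∈ S, P ^ b ∣ (z.1 + z.2 - 2*η) - s₀ := by
    intro z hz
    obtain ⟨_, _, _, _, hE1, _, _⟩ := hsol z hz
    have hid : (z.1+z.2-2*η) - s₀ = ((z.1+z.2-2*η) - m 0) - (s₀ - m 0) := by
      rw [hs₀def]; ring
    rw [hid]; exact dvd_sub hE1 hE1₀
  have hc'S : ∀ z ∈ S, P ^ c' ∣ (z.1 + z.2 - 2*η) := by
    intro z hz
    have h1 : P ^ c' ∣ (z.1+z.2-2*η) - s₀ := dvd_trans (pow_dvd_pow P hc'b) (hsS z hz)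
    have hid : (z.1+z.2-2*η) = ((z.1+z.2-2*η) - s₀) + s₀ := by ring
    rw [hid]; exact dvd_add h1 hc'dvd
  have hc'Sx : c' < b → ∀ z ∈ S, ¬ P ^ (c'+1) ∣ (z.1 + z.2 - 2*η) := by
    intro hlt z hz hcon
    apply hc'exact hlt
    have h1 : P ^ (c'+1) ∣ (z.1+z.2-2*η) - s₀ :=
      dvd_trans (pow_dvd_pow P (by omega)) (hsS z hz)
    have hid : s₀ = (z.1+z.2-2*η) - ((z.1+z.2-2*η) - s₀) := by ring
    rw [hid]; exact dvd_sub hcon h1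
  set T : ℕ := 2*b + c' with hTdef
  set e₁ : ℕ := h - min h T with he₁def
  set e₂ : ℕ := k - e₁ with he₂def
  have hmincases : min h T = h ∨ min h T = T := min_choice h T
  have he₁k : e₁ ≤ k := by omega
  have he₂h : h - e₂ = 2*b + e₁ - a := by omega
  -- the cubic relation
  have hF : ∀ z ∈ S, P ^ T ∣ (2*(z.1+z.2-2*η)^3 - 6*(m 1)*(z.1+z.2-2*η) + 4*(m 2)) := by
    intro z hz
    obtain ⟨_, _, _, _, _, hE2, hE3⟩ := hsol z hz
    obtain ⟨t, ht⟩ := hc'S z hz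
    obtain ⟨w, hw⟩ := hE2
    have h1 : P ^ T ∣ 3*(z.1+z.2-2*η)*((z.1+z.2-2*η)^2 + (z.1-z.2)^2 - 2*m 1) := by
      refine ⟨3*t*w, ?_⟩
      rw [hTdef, pow_add]
      linear_combination (3*((z.1+z.2-2*η)^2+(z.1-z.2)^2-2*m 1))*ht
        + (3*P^c'*t)*hw
    have h2 : P ^ T ∣ ((z.1+z.2-2*η)^3 + 3*(z.1+z.2-2*η)*(z.1-z.2)^2 - 4*m 2) :=
      dvd_trans (pow_dvd_pow P (by omega : T ≤ 3*b)) hE3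
    have hid : 2*(z.1+z.2-2*η)^3 - 6*(m 1)*(z.1+z.2-2*η) + 4*(m 2)
        = 3*(z.1+z.2-2*η)*((z.1+z.2-2*η)^2 + (z.1-z.2)^2 - 2*m 1)
          - ((z.1+z.2-2*η)^3 + 3*(z.1+z.2-2*η)*(z.1-z.2)^2 - 4*m 2) := by ring
    rw [hid]
    exact dvd_sub h1 h2
  -- unit derivative
  have hder : ∀ z ∈ S, ¬ P ∣ ((z.1+z.2-2*η)^2 - m 1) := by
    intro z hz hcon
    obtain ⟨hx, hy, _, _, _, hE2, _⟩ := hsol z hz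
    have h1 : P ∣ 4*((z.1-η)*(z.2-η)) := by
      have hid : 4*((z.1-η)*(z.2-η))
          = 2*((z.1+z.2-2*η)^2 - m 1)
            - ((z.1+z.2-2*η)^2 + (z.1-z.2)^2 - 2*m 1) := by ring
      rw [hid]
      exact dvd_sub (hcon.mul_left 2)
        (dvd_trans (dvd_pow_self P (by omega : 2*b ≠ 0)) hE2)
    rcases hP.dvd_mul.mp h1 with h4 | hxy
    · exact hp4 h4
    · rcases hP.dvd_mul.mp hxy with hh | hh
      exacts [hx hh, hy hh]
  -- s-rigidity
  have hsrigS : ∀ z ∈ S, ∀ w ∈ S,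
      P ∣ ((z.1+z.2-2*η) - (w.1+w.2-2*η)) →
      P ^ T ∣ ((z.1+z.2-2*η) - (w.1+w.2-2*η)) := by
    intro z hz w hw hss
    exact aux_srig hP hp6 (hF z hz) (hF w hw) (hder z hz) hss
  -- d² rigidity at level 2b
  have hd2a : ∀ z ∈ S, ∀ w ∈ S,
      P ^ (2*b) ∣ ((z.1+z.2-2*η) - (w.1+w.2-2*η)) →
      P ^ (2*b) ∣ ((z.1-z.2)^2 - (w.1-w.2)^2) := by
    intro z hz w hw hsw
    obtain ⟨_,_,_,_,_,hE2z,_⟩ := hsol z hz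
    obtain ⟨_,_,_,_,_,hE2w,_⟩ := hsol w hw
    have hid : (z.1-z.2)^2 - (w.1-w.2)^2 =
        ((z.1+z.2-2*η)^2 + (z.1-z.2)^2 - 2*m 1)
        - ((w.1+w.2-2*η)^2 + (w.1-w.2)^2 - 2*m 1)
        - ((z.1+z.2-2*η) - (w.1+w.2-2*η))*((z.1+z.2-2*η) + (w.1+w.2-2*η)) := by ring
    rw [hid]
    exact dvd_sub (dvd_sub hE2z hE2w) (hsw.mul_right _)
  -- d² rigidity at level 2b + e₁
  have hd2 : ∀ z ∈ S, ∀ w ∈ S,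
      P ^ h ∣ ((z.1+z.2-2*η) - (w.1+w.2-2*η)) →
      P ^ T ∣ ((z.1+z.2-2*η) - (w.1+w.2-2*η)) →
      P ^ (2*b+e₁) ∣ ((z.1-z.2)^2 - (w.1-w.2)^2) := by
    intro z hz w hw hsh hsT
    rcases Nat.eq_zero_or_pos e₁ with he0 | hepos
    · rw [he0, Nat.add_zero]
      exact hd2a z hz w hw (dvd_trans (pow_dvd_pow P (by omega : 2*b ≤ T)) hsT)
    · have hTh : T < h := by omega
      have hcb : c' < b := by omega
      obtain ⟨t, ht⟩ := hc'S z hz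
      have htne : ¬ P ∣ t := by
        intro hcon
        apply hc'Sx hcb z hz
        obtain ⟨r, hr⟩ := hcon
        exact ⟨r, by rw [ht, hr, pow_succ]; ring⟩
      obtain ⟨_,_,_,_,_,_,hE3z⟩ := hsol z hz
      obtain ⟨_,_,_,_,_,_,hE3w⟩ := hsol w hw
      have hD : P ^ h ∣ 3*(z.1+z.2-2*η)*((z.1-z.2)^2 - (w.1-w.2)^2) := by
        have h1 : P ^ h ∣
            ((z.1+z.2-2*η)^3 + 3*(z.1+z.2-2*η)*(z.1-z.2)^2 - 4*m 2)
            - ((w.1+w.2-2*η)^3 + 3*(w.1+w.2-2*η)*(w.1-w.2)^2 - 4*m 2) :=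
          dvd_trans (pow_dvd_pow P (le_of_lt hh3b)) (dvd_sub hE3z hE3w)
        have hid : 3*(z.1+z.2-2*η)*((z.1-z.2)^2 - (w.1-w.2)^2)
            = (((z.1+z.2-2*η)^3 + 3*(z.1+z.2-2*η)*(z.1-z.2)^2 - 4*m 2)
              - ((w.1+w.2-2*η)^3 + 3*(w.1+w.2-2*η)*(w.1-w.2)^2 - 4*m 2))
              - ((z.1+z.2-2*η) - (w.1+w.2-2*η))
                * ((z.1+z.2-2*η)^2 + (z.1+z.2-2*η)*(w.1+w.2-2*η)
                  + (w.1+w.2-2*η)^2 + 3*(w.1-w.2)^2) := by ring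
        rw [hid]
        exact dvd_sub h1 (hsh.mul_right _)
      have hsplit : (P:ℤ)^h = P^c' * P^(h-c') := by rw [← pow_add]; congr 1; omega
      have h2 : P ^ (h-c') ∣ ((z.1-z.2)^2 - (w.1-w.2)^2) * (3*t) := by
        have hid2 : 3*(z.1+z.2-2*η)*((z.1-z.2)^2 - (w.1-w.2)^2)
            = P^c' * (((z.1-z.2)^2 - (w.1-w.2)^2) * (3*t)) := by rw [ht]; ring
        rw [hid2, hsplit] at hD
        exact (mul_dvd_mul_iff_left (pow_ne_zero _ hP.ne_zero)).mp hD
      have h3 : ¬ P ∣ 3*t := by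
        intro hcon
        rcases hP.dvd_mul.mp hcon with hc | hc
        exacts [hp3' hc, htne hc]
      have h4 := aux_pow_prime_dvd_cancel hP h3 (h-c') _ h2
      have hexp : 2*b+e₁ = h - c' := by omega
      rw [hexp]
      exact h4
  -- d rigidity
  have hddS : ∀ z ∈ S, ∀ w ∈ S,
      P ^ h ∣ ((z.1+z.2-2*η) - (w.1+w.2-2*η)) →
      P ^ T ∣ ((z.1+z.2-2*η) - (w.1+w.2-2*η)) →
      P ^ (a+1) ∣ ((z.1-z.2) - (w.1-w.2)) →
      P ^ (h-e₂) ∣ ((z.1-z.2) - (w.1-w.2)) := by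
    intro z hz w hw hsh hsT hdlow
    obtain ⟨_,_,hdz,hdz',_,_,_⟩ := hsol z hz
    obtain ⟨_,_,hdw,_,_,_,_⟩ := hsol w hw
    obtain ⟨u, hu⟩ := hdz
    obtain ⟨u', hu'⟩ := hdw
    have hune : ¬ P ∣ u := by
      intro hcon
      apply hdz'
      obtain ⟨r, hr⟩ := hcon
      exact ⟨r, by rw [hu, hr, pow_succ]; ring⟩
    have h1 := hd2 z hz w hw hsh hsT
    have h2 := aux_drig hP hp2 (show 2*a ≤ 2*b+e₁ by omega) hu hu' hune h1 hdlow
    rw [he₂h]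
    exact h2
  -- u² mod p rigidity
  have huuS : ∀ z ∈ S, ∀ w ∈ S,
      P ∣ ((z.1+z.2-2*η) - (w.1+w.2-2*η)) →
      P ∣ (((z.1-z.2)/P^a)^2 - ((w.1-w.2)/P^a)^2) := by
    intro z hz w hw hs1
    have hsT := hsrigS z hz w hw hs1
    have h2b : P^(2*b) ∣ ((z.1+z.2-2*η) - (w.1+w.2-2*η)) :=
      dvd_trans (pow_dvd_pow P (by omega : 2*b ≤ T)) hsT
    have h1 := hd2a z hz w hw h2b
    obtain ⟨_,_,hdz,_,_,_,_⟩ := hsol z hz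
    obtain ⟨_,_,hdw,_,_,_,_⟩ := hsol w hw
    obtain ⟨u, hu⟩ := hdz
    obtain ⟨u', hu'⟩ := hdw
    have hdivz : (z.1-z.2)/P^a = u := by
      rw [hu]; exact Int.mul_ediv_cancel_left _ (pow_ne_zero _ hP.ne_zero)
    have hdivw : (w.1-w.2)/P^a = u' := by
      rw [hu']; exact Int.mul_ediv_cancel_left _ (pow_ne_zero _ hP.ne_zero)
    rw [hdivz, hdivw]
    have hsplit : (P:ℤ)^(2*b) = P^(2*a) * P^(2*b-2*a) := by rw [← pow_add]; congr 1; omega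
    have hid : (z.1-z.2)^2 - (w.1-w.2)^2 = P^(2*a) * (u^2 - u'^2) := by
      rw [hu, hu']; ring
    rw [hid, hsplit] at h1
    have h2 : P^(2*b-2*a) ∣ u^2-u'^2 :=
      (mul_dvd_mul_iff_left (pow_ne_zero _ hP.ne_zero)).mp h1
    exact dvd_trans (dvd_pow_self P (by omega : 2*b-2*a ≠ 0)) h2
  -- cast bridges
  have hcastp : ∀ x y : ℤ, ((x : ZMod p) = (y : ZMod p)) ↔ P ∣ (x - y) := by
    intro x y
    rw [ZMod.intCast_eq_intCast_iff, Int.modEq_iff_dvd, hPdef]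
    exact dvd_sub_comm
  have hcastpow : ∀ (x y : ℤ) (e : ℕ),
      ((x : ZMod (p^e)) = (y : ZMod (p^e))) ↔ P^e ∣ (x - y) := by
    intro x y e
    rw [ZMod.intCast_eq_intCast_iff, Int.modEq_iff_dvd, hPdef]
    push_cast
    exact dvd_sub_comm
  -- finiteness of the image
  have hfin : ((fun z : ℤ × ℤ => (z.1 % P ^ h, z.2 % P ^ h)) '' S).Finite := by
    apply Set.Finite.subset (Set.finite_Icc ((0:ℤ), (0:ℤ)) (P^h, P^h))
    rintro c ⟨z, hz, rfl⟩
    rw [Set.mem_Icc]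
    refine ⟨⟨Int.emod_nonneg _ (pow_ne_zero h hP.ne_zero),
        Int.emod_nonneg _ (pow_ne_zero h hP.ne_zero)⟩,
      ⟨le_of_lt (Int.emod_lt_of_pos _ (pow_pos hP0 h)),
        le_of_lt (Int.emod_lt_of_pos _ (pow_pos hP0 h))⟩⟩
  rw [Set.ncard_eq_toFinset_card _ hfin]
  set F : Finset (ℤ×ℤ) := hfin.toFinset with hFdef
  have hmemF : ∀ c ∈ F, ∃ z ∈ S, c = (z.1 % P^h, z.2 % P^h) := by
    intro c hc
    rw [hFdef, Set.Finite.mem_toFinset] at hc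
    obtain ⟨z, hz, hzc⟩ := hc
    exact ⟨z, hz, hzc.symm⟩
  have hemoddvd : ∀ x : ℤ, P^h ∣ (x % P^h) - x := by
    intro x
    rw [Int.emod_def]
    exact ⟨-(x / P^h), by ring⟩
  have hsrel : ∀ z : ℤ × ℤ,
      P^h ∣ ((z.1 % P^h) + (z.2 % P^h) - 2*η) - (z.1+z.2-2*η) := by
    intro z
    have e1 := hemoddvd z.1
    have e2 := hemoddvd z.2
    have hid : ((z.1 % P^h) + (z.2 % P^h) - 2*η) - (z.1+z.2-2*η)
        = ((z.1 % P^h) - z.1) + ((z.2 % P^h) - z.2) := by ring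
    rw [hid]
    exact dvd_add e1 e2
  have hdrel : ∀ z : ℤ × ℤ,
      P^h ∣ ((z.1 % P^h) - (z.2 % P^h)) - (z.1-z.2) := by
    intro z
    have e1 := hemoddvd z.1
    have e2 := hemoddvd z.2
    have hid : ((z.1 % P^h) - (z.2 % P^h)) - (z.1-z.2)
        = ((z.1 % P^h) - z.1) - ((z.2 % P^h) - z.2) := by ring
    rw [hid]
    exact dvd_sub e1 e2
  have hurel : ∀ z ∈ S, P^(h-a) ∣ ((z.1 % P^h - z.2 % P^h)/P^a - (z.1-z.2)/P^a) := by
    intro z hz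
    obtain ⟨_,_,hdz,_,_,_,_⟩ := hsol z hz
    obtain ⟨u, hu⟩ := hdz
    obtain ⟨w, hw⟩ := hdrel z
    have hsplit : (P:ℤ)^h = P^a * P^(h-a) := by rw [← pow_add]; congr 1; omega
    have hid2 : z.1 % P^h - z.2 % P^h = P^a * (u + P^(h-a) * w) := by
      have hstep : z.1 % P^h - z.2 % P^h = (z.1 - z.2) + P^h * w := by
        have := hw
        omega
      rw [hstep, hu, hsplit]
      ring
    have hid3 : (z.1-z.2)/P^a = u := by
      rw [hu]
      exact Int.mul_ediv_cancel_left _ (pow_ne_zero _ hP.ne_zero)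
    rw [hid2, Int.mul_ediv_cancel_left _ (pow_ne_zero _ hP.ne_zero), hid3]
    exact ⟨w, by ring⟩
  -- the classifying map
  set g : ℤ×ℤ → ZMod p × ZMod p :=
    fun c => (((c.1 + c.2 - 2*η : ℤ) : ZMod p), (((c.1 - c.2)/P^a : ℤ) : ZMod p)) with hgdef
  haveI hne1 : NeZero (p ^ e₁) := ⟨pow_ne_zero _ hp.pos.ne'⟩
  haveI hne2 : NeZero (p ^ e₂) := ⟨pow_ne_zero _ hp.pos.ne'⟩
  have hcard := Finset.card_eq_sum_card_fiberwise
    (s := F) (t := F.image g) (f := g) (fun c hc => Finset.mem_image_of_mem g hc)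
  have hfib : ∀ t ∈ F.image g, (F.filter (fun c => g c = t)).card ≤ p ^ e₁ * p ^ e₂ := by
    intro t _
    have hinj : Set.InjOn (fun c : ℤ×ℤ =>
        (((((c.1+c.2-2*η) % P^h) / P^(h-e₁) : ℤ) : ZMod (p^e₁)),
         ((((c.1-c.2) % P^h) / P^(h-e₂) : ℤ) : ZMod (p^e₂))))
        ((F.filter (fun c => g c = t)) : Set (ℤ×ℤ)) := by
      intro c hcmem c' hcmem' heq
      simp only [Finset.coe_filter, Set.mem_setOf_eq] at hcmem hcmem'
      obtain ⟨hcF, hgc⟩ := hcmem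
      obtain ⟨hcF', hgc'⟩ := hcmem'
      have hgg : g c = g c' := hgc.trans hgc'.symm
      obtain ⟨z, hz, hcz⟩ := hmemF c hcF
      obtain ⟨w, hw, hcw⟩ := hmemF c' hcF'
      subst hcz; subst hcw
      simp only [hgdef] at hgg
      rw [Prod.mk.injEq] at hgg
      obtain ⟨hg1, hg2⟩ := hgg
      dsimp only at heq hg1 hg2 ⊢
      rw [Prod.mk.injEq] at heq
      obtain ⟨heq1, heq2⟩ := heq
      -- step 1 : s congruent mod p
      have hP1h : P ∣ P^h := dvd_pow_self P (by omega : h ≠ 0)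
      have hs1 : P ∣ (z.1+z.2-2*η) - (w.1+w.2-2*η) := by
        have hd := (hcastp _ _).mp hg1
        have hid : (z.1+z.2-2*η) - (w.1+w.2-2*η)
            = (((z.1 % P^h) + (z.2 % P^h) - 2*η) - ((w.1 % P^h) + (w.2 % P^h) - 2*η))
              - (((z.1 % P^h) + (z.2 % P^h) - 2*η) - (z.1+z.2-2*η))
              + (((w.1 % P^h) + (w.2 % P^h) - 2*η) - (w.1+w.2-2*η)) := by ring
        rw [hid]
        exact dvd_add (dvd_sub hd (dvd_trans hP1h (hsrel z))) (dvd_trans hP1h (hsrel w))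
      have hsT := hsrigS z hz w hw hs1
      -- step 2 : s congruent mod p^h via the high digits
      have hfe1 : h - e₁ + e₁ = h := by omega
      have hlow1 : P^(h-e₁) ∣ (((z.1 % P^h) + (z.2 % P^h) - 2*η)
          - ((w.1 % P^h) + (w.2 % P^h) - 2*η)) := by
        have hminT : P^(h-e₁) ∣ (z.1+z.2-2*η) - (w.1+w.2-2*η) :=
          dvd_trans (pow_dvd_pow P (by omega : h - e₁ ≤ T)) hsT
        have hh' : P^(h-e₁) ∣ P^h := pow_dvd_pow P (by omega)
        have hid : (((z.1 % P^h) + (z.2 % P^h) - 2*η) - ((w.1 % P^h) + (w.2 % P^h) - 2*η))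
            = ((z.1+z.2-2*η) - (w.1+w.2-2*η))
              + (((z.1 % P^h) + (z.2 % P^h) - 2*η) - (z.1+z.2-2*η))
              - (((w.1 % P^h) + (w.2 % P^h) - 2*η) - (w.1+w.2-2*η)) := by ring
        rw [hid]
        exact dvd_sub (dvd_add hminT (dvd_trans hh' (hsrel z))) (dvd_trans hh' (hsrel w))
      have hq1 := (hcastpow _ _ e₁).mp heq1
      have hsch : P^h ∣ (((z.1 % P^h) + (z.2 % P^h) - 2*η)
          - ((w.1 % P^h) + (w.2 % P^h) - 2*η)) := by
        have := aux_digits (e := e₁) (f := h - e₁) hP1 hlow1 (by rw [hfe1]; exact hq1)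
        rwa [hfe1] at this
      have hsh : P^h ∣ (z.1+z.2-2*η) - (w.1+w.2-2*η) := by
        have hid : (z.1+z.2-2*η) - (w.1+w.2-2*η)
            = (((z.1 % P^h) + (z.2 % P^h) - 2*η) - ((w.1 % P^h) + (w.2 % P^h) - 2*η))
              - (((z.1 % P^h) + (z.2 % P^h) - 2*η) - (z.1+z.2-2*η))
              + (((w.1 % P^h) + (w.2 % P^h) - 2*η) - (w.1+w.2-2*η)) := by ring
        rw [hid]
        exact dvd_add (dvd_sub hsch (hsrel z)) (hsrel w)
      -- step 3 : u congruent mod p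
      have hu1 : P ∣ ((z.1-z.2)/P^a) - ((w.1-w.2)/P^a) := by
        have hd := (hcastp _ _).mp hg2
        have hPha : P ∣ P^(h-a) := dvd_pow_self P (by omega : h - a ≠ 0)
        have h1 := hurel z hz
        have h2 := hurel w hw
        have hid : ((z.1-z.2)/P^a) - ((w.1-w.2)/P^a)
            = (((z.1 % P^h - z.2 % P^h)/P^a) - ((w.1 % P^h - w.2 % P^h)/P^a))
              - (((z.1 % P^h - z.2 % P^h)/P^a) - ((z.1-z.2)/P^a))
              + (((w.1 % P^h - w.2 % P^h)/P^a) - ((w.1-w.2)/P^a)) := by ring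
        rw [hid]
        exact dvd_add (dvd_sub hd (dvd_trans hPha h1)) (dvd_trans hPha h2)
      obtain ⟨_,_,hdz,_,_,_,_⟩ := hsol z hz
      obtain ⟨_,_,hdw,_,_,_,_⟩ := hsol w hw
      obtain ⟨u, hu⟩ := hdz
      obtain ⟨u', hu'⟩ := hdw
      have hdivz : (z.1-z.2)/P^a = u := by
        rw [hu]; exact Int.mul_ediv_cancel_left _ (pow_ne_zero _ hP.ne_zero)
      have hdivw : (w.1-w.2)/P^a = u' := by
        rw [hu']; exact Int.mul_ediv_cancel_left _ (pow_ne_zero _ hP.ne_zero)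
      have hdlow : P^(a+1) ∣ (z.1-z.2) - (w.1-w.2) := by
        rw [hdivz, hdivw] at hu1
        obtain ⟨r, hr⟩ := hu1
        refine ⟨r, ?_⟩
        rw [hu, hu', pow_succ]
        linear_combination P^a * hr
      have hdT := hddS z hz w hw hsh hsT hdlow
      -- step 4 : d congruent mod p^h via the high digits
      have hfe2 : h - e₂ + e₂ = h := by omega
      have hlow2 : P^(h-e₂) ∣ ((z.1 % P^h - z.2 % P^h) - (w.1 % P^h - w.2 % P^h)) := by
        have hh' : P^(h-e₂) ∣ P^h := pow_dvd_pow P (by omega)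
        have hid : ((z.1 % P^h - z.2 % P^h) - (w.1 % P^h - w.2 % P^h))
            = ((z.1-z.2) - (w.1-w.2))
              + ((z.1 % P^h - z.2 % P^h) - (z.1-z.2))
              - ((w.1 % P^h - w.2 % P^h) - (w.1-w.2)) := by ring
        rw [hid]
        exact dvd_sub (dvd_add hdT (dvd_trans hh' (hdrel z))) (dvd_trans hh' (hdrel w))
      have hq2 := (hcastpow _ _ e₂).mp heq2
      have hdch : P^h ∣ ((z.1 % P^h - z.2 % P^h) - (w.1 % P^h - w.2 % P^h)) := by
        have := aux_digits (e := e₂) (f := h - e₂) hP1 hlow2 (by rw [hfe2]; exact hq2)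
        rwa [hfe2] at this
      -- step 5 : conclude
      have h2c1 : P^h ∣ ((z.1 % P^h) - (w.1 % P^h)) * 2 := by
        have hid : ((z.1 % P^h) - (w.1 % P^h)) * 2
            = (((z.1 % P^h) + (z.2 % P^h) - 2*η) - ((w.1 % P^h) + (w.2 % P^h) - 2*η))
              + ((z.1 % P^h - z.2 % P^h) - (w.1 % P^h - w.2 % P^h)) := by ring
        rw [hid]; exact dvd_add hsch hdch
      have h2c2 : P^h ∣ ((z.2 % P^h) - (w.2 % P^h)) * 2 := by
        have hid : ((z.2 % P^h) - (w.2 % P^h)) * 2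
            = (((z.1 % P^h) + (z.2 % P^h) - 2*η) - ((w.1 % P^h) + (w.2 % P^h) - 2*η))
              - ((z.1 % P^h - z.2 % P^h) - (w.1 % P^h - w.2 % P^h)) := by ring
        rw [hid]; exact dvd_sub hsch hdch
      have hc1 := aux_pow_prime_dvd_cancel hP hp2 h _ h2c1
      have hc2 := aux_pow_prime_dvd_cancel hP hp2 h _ h2c2
      have hb1' : z.1 % P^h = w.1 % P^h :=
        aux_eq_of_dvd hc1 (Int.emod_nonneg _ (pow_ne_zero h hP.ne_zero))
          (Int.emod_lt_of_pos _ (pow_pos hP0 h))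
          (Int.emod_nonneg _ (pow_ne_zero h hP.ne_zero))
          (Int.emod_lt_of_pos _ (pow_pos hP0 h))
      have hb2' : z.2 % P^h = w.2 % P^h :=
        aux_eq_of_dvd hc2 (Int.emod_nonneg _ (pow_ne_zero h hP.ne_zero))
          (Int.emod_lt_of_pos _ (pow_pos hP0 h))
          (Int.emod_nonneg _ (pow_ne_zero h hP.ne_zero))
          (Int.emod_lt_of_pos _ (pow_pos hP0 h))
      rw [Prod.mk.injEq]
      exact ⟨hb1', hb2'⟩
    calc (F.filter (fun c => g c = t)).card
        ≤ (Finset.univ : Finset (ZMod (p^e₁) × ZMod (p^e₂))).card :=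
          Finset.card_le_card_of_injOn _ (fun _ _ => Finset.mem_univ _) hinj
      _ = p^e₁ * p^e₂ := by
          rw [Finset.card_univ, Fintype.card_prod, ZMod.card, ZMod.card]
  have hG6 : (F.image g).card ≤ 6 := by
    set q : Polynomial (ZMod p) := Polynomial.C 2 * Polynomial.X^3
        + Polynomial.C (((-6 * m 1 : ℤ) : ZMod p)) * Polynomial.X
        + Polynomial.C (((4 * m 2 : ℤ) : ZMod p)) with hqdef
    have hq3 : q.coeff 3 = 2 := by
      simp [hqdef, Polynomial.coeff_add, Polynomial.coeff_C_mul,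
        Polynomial.coeff_X_pow, Polynomial.coeff_C, Polynomial.coeff_X]
    have h2ne : (2 : ZMod p) ≠ 0 := by
      have hint : ((2:ℤ) : ZMod p) ≠ 0 := by
        rw [Ne, ZMod.intCast_zmod_eq_zero_iff_dvd]
        intro hdvd
        have hle : (p:ℤ) ≤ 2 := Int.le_of_dvd (by norm_num) hdvd
        have hgt : (3:ℤ) < (p:ℤ) := by exact_mod_cast hp3
        omega
      simpa using hint
    have hqne : q ≠ 0 := fun hq0 => h2ne (by rw [← hq3, hq0, Polynomial.coeff_zero])
    have hqdeg : q.natDegree ≤ 3 := by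
      refine le_trans (Polynomial.natDegree_add_le _ _)
        (max_le (le_trans (Polynomial.natDegree_add_le _ _) (max_le ?_ ?_)) ?_)
      · exact le_trans (Polynomial.natDegree_C_mul_le _ _)
          (le_of_eq (Polynomial.natDegree_X_pow 3))
      · exact le_trans (Polynomial.natDegree_C_mul_le _ _)
          (by simp [Polynomial.natDegree_X])
      · exact le_trans (le_of_eq (Polynomial.natDegree_C _)) (Nat.zero_le 3)
    have hroots : (F.image g).image Prod.fst ⊆ q.roots.toFinset := by
      intro α hα
      rw [Finset.mem_image] at hα
      obtain ⟨t, htG, hαt⟩ := hα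
      rw [Finset.mem_image] at htG
      obtain ⟨c, hcF, hct⟩ := htG
      obtain ⟨z, hz, hcz⟩ := hmemF c hcF
      subst hcz
      have hα2 : α = (((z.1+z.2-2*η : ℤ)) : ZMod p) := by
        rw [← hαt, ← hct]
        simp only [hgdef]
        exact (hcastp _ _).mpr
          (dvd_trans (dvd_pow_self P (by omega : h ≠ 0)) (hsrel z))
      rw [Multiset.mem_toFinset, Polynomial.mem_roots']
      refine ⟨hqne, ?_⟩
      rw [Polynomial.IsRoot, hα2]
      have heval : q.eval (((z.1+z.2-2*η : ℤ)) : ZMod p)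
          = (((2*(z.1+z.2-2*η)^3 - 6*(m 1)*(z.1+z.2-2*η) + 4*(m 2) : ℤ)) : ZMod p) := by
        simp only [hqdef, Polynomial.eval_add, Polynomial.eval_mul, Polynomial.eval_pow,
          Polynomial.eval_C, Polynomial.eval_X]
        push_cast
        ring
      rw [heval, ZMod.intCast_zmod_eq_zero_iff_dvd]
      exact dvd_trans (dvd_pow_self P (by omega : T ≠ 0)) (hF z hz)
    have h3 : ((F.image g).image Prod.fst).card ≤ 3 :=
      le_trans (Finset.card_le_card hroots)
        (le_trans (Multiset.toFinset_card_le _) (le_trans (Polynomial.card_roots' q) hqdeg))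
    have hGcard := Finset.card_eq_sum_card_fiberwise
      (s := F.image g) (t := (F.image g).image Prod.fst) (f := Prod.fst)
      (fun t ht => Finset.mem_image_of_mem _ ht)
    have hGfib : ∀ α ∈ (F.image g).image Prod.fst,
        ((F.image g).filter (fun t => t.1 = α)).card ≤ 2 := by
      intro α _
      rcases Finset.eq_empty_or_nonempty ((F.image g).filter (fun t => t.1 = α))
        with he | hne'
      · rw [he]; simp
      · obtain ⟨t₀, ht₀⟩ := hne'
        have ht₀' := Finset.mem_filter.mp ht₀
        have hsub : (F.image g).filter (fun t => t.1 = α)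
            ⊆ {(α, t₀.2), (α, -t₀.2)} := by
          intro t ht
          have ht' := Finset.mem_filter.mp ht
          obtain ⟨c, hcF, hct⟩ := Finset.mem_image.mp ht'.1
          obtain ⟨c₀, hc₀F, hct₀⟩ := Finset.mem_image.mp ht₀'.1
          obtain ⟨z, hz, hcz⟩ := hmemF c hcF
          obtain ⟨w, hw, hcw⟩ := hmemF c₀ hc₀F
          subst hcz; subst hcw
          have ht1 : t.1 = (((z.1+z.2-2*η : ℤ)) : ZMod p) := by
            rw [← hct]
            simp only [hgdef]
            exact (hcastp _ _).mpr
              (dvd_trans (dvd_pow_self P (by omega : h ≠ 0)) (hsrel z))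
          have ht₀1 : t₀.1 = (((w.1+w.2-2*η : ℤ)) : ZMod p) := by
            rw [← hct₀]
            simp only [hgdef]
            exact (hcastp _ _).mpr
              (dvd_trans (dvd_pow_self P (by omega : h ≠ 0)) (hsrel w))
          have ht2 : t.2 = ((((z.1-z.2)/P^a : ℤ)) : ZMod p) := by
            rw [← hct]
            simp only [hgdef]
            exact (hcastp _ _).mpr
              (dvd_trans (dvd_pow_self P (by omega : h - a ≠ 0)) (hurel z hz))
          have ht₀2 : t₀.2 = ((((w.1-w.2)/P^a : ℤ)) : ZMod p) := by
            rw [← hct₀]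
            simp only [hgdef]
            exact (hcastp _ _).mpr
              (dvd_trans (dvd_pow_self P (by omega : h - a ≠ 0)) (hurel w hw))
          have hfst : (((z.1+z.2-2*η : ℤ)) : ZMod p) = (((w.1+w.2-2*η : ℤ)) : ZMod p) := by
            rw [← ht1, ← ht₀1, ht'.2, ht₀'.2]
          have hs1 : P ∣ (z.1+z.2-2*η) - (w.1+w.2-2*η) := (hcastp _ _).mp hfst
          have huu := huuS z hz w hw hs1
          have hcast0 : ((((z.1-z.2)/P^a)^2 - ((w.1-w.2)/P^a)^2 : ℤ) : ZMod p) = 0 := by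
            rw [ZMod.intCast_zmod_eq_zero_iff_dvd]
            exact huu
          have hββ : t.2^2 = t₀.2^2 := by
            rw [ht2, ht₀2]
            push_cast at hcast0
            linear_combination hcast0
          have hcases : t.2 = t₀.2 ∨ t.2 = -t₀.2 := by
            have hfactor : (t.2 - t₀.2) * (t.2 + t₀.2) = 0 := by linear_combination hββ
            rcases mul_eq_zero.mp hfactor with h0 | h0
            · exact Or.inl (sub_eq_zero.mp h0)
            · exact Or.inr (eq_neg_of_add_eq_zero_left h0)
          rw [Finset.mem_insert, Finset.mem_singleton]
          rcases hcases with hcc | hcc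
          · exact Or.inl (Prod.ext_iff.mpr ⟨ht'.2, hcc⟩)
          · exact Or.inr (Prod.ext_iff.mpr ⟨ht'.2, hcc⟩)
        calc ((F.image g).filter (fun t => t.1 = α)).card
            ≤ ({(α, t₀.2), (α, -t₀.2)} : Finset (ZMod p × ZMod p)).card :=
              Finset.card_le_card hsub
          _ ≤ 2 := le_trans (Finset.card_insert_le _ _) (by simp)
    calc (F.image g).card
        = ∑ α ∈ (F.image g).image Prod.fst,
            ((F.image g).filter (fun t => t.1 = α)).card := hGcard
      _ ≤ ((F.image g).image Prod.fst).card * 2 := by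
          have := Finset.sum_le_card_nsmul ((F.image g).image Prod.fst) _ 2 hGfib
          simpa [smul_eq_mul] using this
      _ ≤ 3 * 2 := Nat.mul_le_mul_right _ h3
      _ = 6 := rfl
  have hsum : F.card ≤ (F.image g).card * (p ^ e₁ * p ^ e₂) := by
    rw [hcard]
    have := Finset.sum_le_card_nsmul (F.image g) _ (p^e₁ * p^e₂) hfib
    simpa [smul_eq_mul] using this
  calc F.card ≤ (F.image g).card * (p^e₁*p^e₂) := hsum
    _ ≤ 6 * (p^e₁*p^e₂) := Nat.mul_le_mul_right _ hG6
    _ = 6 * p^(e₁+e₂) := by rw [pow_add]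
    _ ≤ 6 * p^k := Nat.mul_le_mul_left _ (Nat.pow_le_pow_right hp.pos (by omega))
end

section
/- There exists an absolute constant C > 0 with the following property. Let X ≥ 2 and M ≥ 2 be real numbers, let p be a prime with M < p ≤ 2M, let c and d be nonnegative integers with M^c ≤ X and M^d ≤ X, let u, v be positive integers with u + v = 6, and let ξ, ζ be integers. Then ∫_{[0,1)³} |𝔣_c(α;ξ)^{2u} 𝔣_d(α;ζ)^{2v}| dα ≤ C (J_{6,3}(X/M^c))^{u/6} (J_{6,3}(X/M^d))^{v/6}. -/
open scoped BigOperators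
open MeasureTheory

noncomputable section

/-- `J s k X` counts the `2s`-tuples of integers `(x₁,…,x_s,y₁,…,y_s)` with
`1 ≤ x_i, y_i ≤ X` satisfying `x₁^j + ⋯ + x_s^j = y₁^j + ⋯ + y_s^j` for `1 ≤ j ≤ k`. -/
def J (s k : ℕ) (X : ℝ) : ℕ :=
  Set.ncard {xy : (Fin s → ℤ) × (Fin s → ℤ) |
    (∀ i, 1 ≤ xy.1 i ∧ (xy.1 i : ℝ) ≤ X) ∧
    (∀ i, 1 ≤ xy.2 i ∧ (xy.2 i : ℝ) ≤ X) ∧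
    (∀ j : ℕ, 1 ≤ j → j ≤ k → ∑ i, xy.1 i ^ j = ∑ i, xy.2 i ^ j)}

/-- `e z = e^{2πiz}`. -/
def eThe (z : ℝ) : ℂ := Complex.exp (2 * Real.pi * Complex.I * z)

/-- The unit cube `[0,1)³`. -/
def cube : Set (Fin 3 → ℝ) := Set.univ.pi fun _ => Set.Ico (0 : ℝ) 1

/-- `𝔣_c(α;ξ) = Σ_{1 ≤ x ≤ X, x ≡ ξ (mod p^c)} e(α₁x + α₂x² + α₃x³)`. -/
def fgen (X : ℝ) (p c : ℕ) (ξ : ℤ) (α : Fin 3 → ℝ) : ℂ :=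
  ∑ x ∈ Finset.Icc (1 : ℤ) ⌊X⌋,
    if x ≡ ξ [ZMOD (p : ℤ) ^ c] then eThe (α 0 * x + α 1 * x ^ 2 + α 2 * x ^ 3) else 0

end

/-!
Expanding `|𝔣|^{2s} = 𝔣^s conj(𝔣)^s` and integrating over `[0,1)³` (orthogonality of `e(m·α)`)
shows that the `2s`-th moment of a cubic Weyl sum over a finite set `T ⊆ ℤ` is the number of
solutions of the cubic Vinogradov system in `T`. The system is invariant under `x ↦ a + qx`
(`q ≠ 0`), so the residue class `ξ mod p^c` in `[1, X]`, which lies in such an image of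
`(0, ⌊X/p^c⌋ + 1] ⊆ (0, 2⌊X/M^c⌋]`, has at most as many solutions as that interval; splitting it
into two translates of `[1, ⌊X/M^c⌋]` costs a factor `2^{2s}`. Hölder's inequality with exponents
`6/u` and `6/v` combines the two twelfth moments, with `C = 2^12`.
-/

open Finset
open scoped ENNReal

lemma norm_sum_pow_le {ι E : Type*} [SeminormedAddCommGroup E] (t : Finset ι) (z : ι → E)
    {N : ℕ} (hN : N ≠ 0) : ‖∑ i ∈ t, z i‖ ^ N ≤ #t ^ (N - 1) * ∑ i ∈ t, ‖z i‖ ^ N := by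
  obtain ⟨r, rfl⟩ := Nat.exists_eq_succ_of_ne_zero hN
  calc ‖∑ i ∈ t, z i‖ ^ (r + 1) ≤ (∑ i ∈ t, ‖z i‖) ^ (r + 1) := by gcongr; exact norm_sum_le _ _
    _ ≤ _ := pow_sum_le_card_mul_sum_pow (fun _ _ => norm_nonneg _) r

lemma integral_pow_mul_pow_le {α : Type*} [MeasurableSpace α] {μ : Measure α} {f g : α → ℝ}
    (hf₀ : 0 ≤ f) (hg₀ : 0 ≤ g) {u v n : ℕ} (hu : 0 < u) (hv : 0 < v) (huv : u + v = n)
    (hf : MemLp f n μ) (hg : MemLp g n μ) :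
    ∫ x, f x ^ u * g x ^ v ∂μ ≤
      (∫ x, f x ^ n ∂μ) ^ ((u : ℝ) / n) * (∫ x, g x ^ n ∂μ) ^ ((v : ℝ) / n) := by
  have hn : (n : ℝ) = u + v := by exact_mod_cast huv.symm
  have hu' : (0 : ℝ) < u := by exact_mod_cast hu
  have hv' : (0 : ℝ) < v := by exact_mod_cast hv
  have hpq : Real.HolderConjugate (n / u) (n / v) := by
    rw [Real.holderConjugate_iff, inv_div, inv_div, ← add_div, ← hn,
      div_self (by linarith : (0 : ℝ) < n).ne', one_lt_div hu']
    exact ⟨by linarith, rfl⟩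
  have hmem {h : α → ℝ} (h₀ : 0 ≤ h) (hh : MemLp h n μ) {k : ℕ} (hk : 0 < k) :
      MemLp (fun x => h x ^ k) (ENNReal.ofReal (n / k)) μ := by
    have := hh.norm_rpow_div k
    simp only [ENNReal.toReal_natCast, Real.rpow_natCast, Real.norm_of_nonneg (h₀ _)] at this
    rwa [ENNReal.ofReal_div_of_pos (by exact_mod_cast hk), ENNReal.ofReal_natCast,
      ENNReal.ofReal_natCast]
  have hpow {h : α → ℝ} (h₀ : 0 ≤ h) {k : ℕ} (hk : 0 < k) (x : α) :
      (h x ^ k) ^ ((n : ℝ) / k) = h x ^ n := by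
    rw [← Real.rpow_natCast, ← Real.rpow_mul (h₀ x), mul_div_cancel₀ _ (by exact_mod_cast hk.ne'),
      Real.rpow_natCast]
  have := integral_mul_le_Lp_mul_Lq_of_nonneg hpq (.of_forall fun x => pow_nonneg (hf₀ x) u)
    (.of_forall fun x => pow_nonneg (hg₀ x) v) (hmem hf₀ hf hu) (hmem hg₀ hg hv)
  simpa only [hpow hf₀ hu, hpow hg₀ hv, one_div_div] using this

lemma eThe_eq_exp_mul_I (a : ℝ) : eThe a = Complex.exp (↑(2 * Real.pi * a) * Complex.I) := by
  rw [eThe]; push_cast; ring_nf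

lemma eThe_add (a b : ℝ) : eThe (a + b) = eThe a * eThe b := by
  simp only [eThe, ← Complex.exp_add]; push_cast; ring_nf

lemma eThe_sum {ι : Type*} (s : Finset ι) (g : ι → ℝ) :
    eThe (∑ i ∈ s, g i) = ∏ i ∈ s, eThe (g i) := by
  simp only [eThe, Complex.ofReal_sum, Finset.mul_sum, Complex.exp_sum]

lemma norm_eThe (a : ℝ) : ‖eThe a‖ = 1 := by
  rw [eThe_eq_exp_mul_I, Complex.norm_exp_ofReal_mul_I]

lemma conj_eThe (a : ℝ) : (starRingEnd ℂ) (eThe a) = eThe (-a) := by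
  rw [eThe, ← Complex.exp_conj, eThe]; simp [map_ofNat]

@[fun_prop]
lemma continuous_eThe : Continuous eThe := by
  unfold eThe; fun_prop

lemma integral_Ico_eThe_mul_intCast (n : ℤ) :
    ∫ t in Set.Ico (0 : ℝ) 1, eThe (t * n) = if n = 0 then 1 else 0 := by
  rw [Measure.restrict_congr_set Ico_ae_eq_Ioc, ← intervalIntegral.integral_of_le zero_le_one]
  split_ifs with hn
  · simp [hn, eThe]
  have hc : 2 * Real.pi * Complex.I * n ≠ 0 := by simp [Real.pi_ne_zero, hn]
  have h : ∀ t : ℝ, eThe (t * n) = Complex.exp (2 * Real.pi * Complex.I * n * t) := fun t => by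
    rw [eThe]; push_cast; ring_nf
  simp_rw [h, integral_exp_mul_complex hc, Complex.ofReal_one, mul_one, Complex.ofReal_zero,
    mul_zero, Complex.exp_zero, mul_comm _ (n : ℂ), Complex.exp_int_mul_two_pi_mul_I, sub_self,
    zero_div]

lemma integral_univ_pi_Ico_eThe {ι : Type*} [Fintype ι] (m : ι → ℤ) :
    ∫ α in Set.univ.pi fun _ => Set.Ico (0 : ℝ) 1, eThe (∑ i, α i * m i) =
      if m = 0 then 1 else 0 := by
  simp_rw [eThe_sum]
  rw [volume_pi, Measure.restrict_pi_pi,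
    integral_fintype_prod_eq_prod (fun i t => eThe (t * m i))]
  simp_rw [integral_Ico_eThe_mul_intCast]
  simp [Finset.prod_ite_zero, funext_iff]

instance isFiniteMeasure_restrict_cube : IsFiniteMeasure (volume.restrict cube) :=
  isFiniteMeasure_restrict.2 (by simp [cube, volume_pi_pi])

noncomputable def cubicExpSum (T : Finset ℤ) (α : Fin 3 → ℝ) : ℂ :=
  ∑ x ∈ T, eThe (α 0 * x + α 1 * x ^ 2 + α 2 * x ^ 3)

def powerSums {s : ℕ} (x : Fin s → ℤ) (j : Fin 3) : ℤ := ∑ i, x i ^ (j.val + 1)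

def solutions (s : ℕ) (T : Finset ℤ) : Finset ((Fin s → ℤ) × (Fin s → ℤ)) :=
  {xy ∈ Fintype.piFinset (fun _ => T) ×ˢ Fintype.piFinset (fun _ => T) |
    powerSums xy.1 = powerSums xy.2}

lemma mem_solutions {s : ℕ} {T : Finset ℤ} {xy : (Fin s → ℤ) × (Fin s → ℤ)} :
    xy ∈ solutions s T ↔
      (∀ i, xy.1 i ∈ T) ∧ (∀ i, xy.2 i ∈ T) ∧ powerSums xy.1 = powerSums xy.2 := by
  simp [solutions, and_assoc]

lemma solutions_mono (s : ℕ) {T U : Finset ℤ} (h : T ⊆ U) : solutions s T ⊆ solutions s U := by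
  intro xy
  simp only [mem_solutions]
  exact fun ⟨h₁, h₂, h₃⟩ => ⟨fun i => h (h₁ i), fun i => h (h₂ i), h₃⟩

@[fun_prop]
lemma continuous_cubicExpSum (T : Finset ℤ) : Continuous (cubicExpSum T) := by
  unfold cubicExpSum; fun_prop

lemma norm_cubicExpSum_le (T : Finset ℤ) (α : Fin 3 → ℝ) : ‖cubicExpSum T α‖ ≤ #T := by
  rw [cubicExpSum]
  simpa [norm_eThe] using norm_sum_le T fun x => eThe (α 0 * x + α 1 * x ^ 2 + α 2 * x ^ 3)

lemma memLp_norm_cubicExpSum_pow (T : Finset ℤ) (N : ℕ) (r : ℝ≥0∞) :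
    MemLp (fun α => ‖cubicExpSum T α‖ ^ N) r (volume.restrict cube) :=
  .of_bound (Continuous.aestronglyMeasurable (by fun_prop)) (#T ^ N) (.of_forall fun α => by
    rw [norm_pow, norm_norm]; gcongr; exact norm_cubicExpSum_le T α)

lemma integrable_norm_cubicExpSum_pow (T : Finset ℤ) (N : ℕ) :
    Integrable (fun α => ‖cubicExpSum T α‖ ^ N) (volume.restrict cube) :=
  memLp_one_iff_integrable.1 (memLp_norm_cubicExpSum_pow T N 1)

lemma sum_cubic_eq_sum_mul_powerSums {s : ℕ} (α : Fin 3 → ℝ) (x : Fin s → ℤ) :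
    ∑ i, (α 0 * x i + α 1 * x i ^ 2 + α 2 * x i ^ 3) = ∑ j, α j * powerSums x j := by
  simp [powerSums, Fin.sum_univ_three, Finset.sum_add_distrib, Finset.mul_sum]

lemma cubicExpSum_pow (T : Finset ℤ) (s : ℕ) (α : Fin 3 → ℝ) :
    cubicExpSum T α ^ s =
      ∑ x ∈ Fintype.piFinset (fun _ : Fin s => T), eThe (∑ j, α j * powerSums x j) := by
  rw [← Fin.prod_const, cubicExpSum, Finset.prod_univ_sum]
  simp_rw [← eThe_sum, sum_cubic_eq_sum_mul_powerSums]

lemma ofReal_norm_cubicExpSum_pow (T : Finset ℤ) (s : ℕ) (α : Fin 3 → ℝ) :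
    ((‖cubicExpSum T α‖ ^ (2 * s) : ℝ) : ℂ) =
      ∑ x ∈ Fintype.piFinset (fun _ : Fin s => T), ∑ y ∈ Fintype.piFinset (fun _ : Fin s => T),
        eThe (∑ j, α j * ((powerSums x j - powerSums y j : ℤ) : ℝ)) := by
  rw [pow_mul, Complex.ofReal_pow, Complex.ofReal_pow, ← Complex.mul_conj', mul_pow, ← map_pow,
    cubicExpSum_pow, map_sum, Finset.sum_mul_sum]
  simp_rw [conj_eThe, ← eThe_add]
  simp only [← sub_eq_add_neg, Int.cast_sub, mul_sub, Finset.sum_sub_distrib]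

lemma integral_norm_cubicExpSum_pow (T : Finset ℤ) (s : ℕ) :
    ∫ α in cube, ‖cubicExpSum T α‖ ^ (2 * s) = #(solutions s T) := by
  have hint (m : Fin 3 → ℤ) : Integrable (fun α : Fin 3 → ℝ => eThe (∑ j, α j * m j))
      (volume.restrict cube) :=
    .of_bound (Continuous.aestronglyMeasurable (by fun_prop)) 1
      (.of_forall fun α => (norm_eThe _).le)
  apply Complex.ofReal_injective
  rw [← integral_complex_ofReal]
  simp_rw [ofReal_norm_cubicExpSum_pow]
  rw [integral_finsetSum _ fun x _ => integrable_finsetSum _ fun y _ => hint _]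
  simp_rw [integral_finsetSum _ fun y _ => hint _]
  simp_rw [cube, integral_univ_pi_Ico_eThe]
  have hzero (x y : Fin s → ℤ) :
      (fun j => powerSums x j - powerSums y j) = 0 ↔ powerSums x = powerSums y := by
    simp [funext_iff, sub_eq_zero]
  simp_rw [hzero]
  rw [← Finset.sum_product', Finset.sum_boole, solutions]
  norm_cast

lemma powerSums_affine {s : ℕ} (a q : ℤ) (x : Fin s → ℤ) :
    powerSums (fun i => a + q * x i) 0 = s * a + q * powerSums x 0 ∧
    powerSums (fun i => a + q * x i) 1 =
      s * a ^ 2 + 2 * a * q * powerSums x 0 + q ^ 2 * powerSums x 1 ∧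
    powerSums (fun i => a + q * x i) 2 =
      s * a ^ 3 + 3 * a ^ 2 * q * powerSums x 0 + 3 * a * q ^ 2 * powerSums x 1 +
        q ^ 3 * powerSums x 2 := by
  simp only [powerSums, Fin.val_zero, Fin.val_one, Fin.val_two, Finset.mul_sum]
  refine ⟨?_, ?_, ?_⟩ <;>
  · rw [← nsmul_eq_mul, ← Fin.sum_const]
    simp only [← Finset.sum_add_distrib]
    exact Finset.sum_congr rfl fun i _ => by ring

lemma powerSums_affine_eq_iff {s : ℕ} {a q : ℤ} (hq : q ≠ 0) (x y : Fin s → ℤ) :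
    powerSums (fun i => a + q * x i) = powerSums (fun i => a + q * y i) ↔
      powerSums x = powerSums y := by
  obtain ⟨hx₀, hx₁, hx₂⟩ := powerSums_affine a q x
  obtain ⟨hy₀, hy₁, hy₂⟩ := powerSums_affine a q y
  simp only [funext_iff, Fin.forall_fin_succ, IsEmpty.forall_iff, Fin.succ_zero_eq_one,
    Fin.succ_one_eq_two, and_true]
  rw [hx₀, hx₁, hx₂, hy₀, hy₁, hy₂]
  constructor
  · rintro ⟨h₀, h₁, h₂⟩
    have e₀ : powerSums x 0 = powerSums y 0 := mul_left_cancel₀ hq (by linarith)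
    rw [e₀] at h₁ h₂
    have e₁ : powerSums x 1 = powerSums y 1 := mul_left_cancel₀ (pow_ne_zero 2 hq) (by linarith)
    rw [e₁] at h₂
    exact ⟨e₀, e₁, mul_left_cancel₀ (pow_ne_zero 3 hq) (by linarith)⟩
  · rintro ⟨e₀, e₁, e₂⟩
    rw [e₀, e₁, e₂]
    exact ⟨rfl, rfl, rfl⟩

lemma card_solutions_image_affine_le (s : ℕ) {a q : ℤ} (hq : q ≠ 0) (T : Finset ℤ) :
    #(solutions s (T.image fun t => a + q * t)) ≤ #(solutions s T) := by
  refine Finset.card_le_card_of_surjOn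
    (fun xy => (fun i => a + q * xy.1 i, fun i => a + q * xy.2 i)) ?_
  rintro ⟨x', y'⟩ hxy
  obtain ⟨hx, hy, hxy⟩ := mem_solutions.1 hxy
  choose x hxT hx' using fun i => Finset.mem_image.1 (hx i)
  choose y hyT hy' using fun i => Finset.mem_image.1 (hy i)
  obtain rfl : (fun i => a + q * x i) = x' := funext hx'
  obtain rfl : (fun i => a + q * y i) = y' := funext hy'
  exact ⟨(x, y), mem_solutions.2 ⟨hxT, hyT, (powerSums_affine_eq_iff hq x y).1 hxy⟩, rfl⟩

lemma cubicExpSum_Ioc_zero_mul (n : ℕ) {m : ℤ} (hm : 0 ≤ m) (α : Fin 3 → ℝ) :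
    cubicExpSum (Ioc 0 (n * m)) α = ∑ k ∈ range n, cubicExpSum (Ioc (k * m) (k * m + m)) α := by
  induction n with
  | zero => simp [cubicExpSum]
  | succ n ih =>
    rw [Nat.cast_succ, add_one_mul, sum_range_succ, ← ih, cubicExpSum, cubicExpSum, cubicExpSum,
      ← sum_union (Ioc_disjoint_Ioc_of_le le_rfl),
      Ioc_union_Ioc_eq_Ioc (by positivity) (by linarith)]

lemma card_solutions_Ioc_mul_le {s : ℕ} (hs : s ≠ 0) (n : ℕ) {m : ℤ} (hm : 0 ≤ m) :
    (#(solutions s (Ioc 0 (n * m))) : ℝ) ≤ n ^ (2 * s) * #(solutions s (Icc 1 m)) := by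
  have hblock (k : ℕ) : #(solutions s (Ioc (k * m) (k * m + m))) ≤ #(solutions s (Icc 1 m)) := by
    rw [← Icc_add_one_left_eq_Ioc, ← image_add_left_Icc]
    simpa using card_solutions_image_affine_le s one_ne_zero (a := k * m) (Icc 1 m)
  calc (#(solutions s (Ioc 0 (n * m))) : ℝ)
      = ∫ α in cube, ‖∑ k ∈ range n, cubicExpSum (Ioc (k * m) (k * m + m)) α‖ ^ (2 * s) := by
        simp_rw [← cubicExpSum_Ioc_zero_mul n hm, integral_norm_cubicExpSum_pow]
    _ ≤ ∫ α in cube, (n : ℝ) ^ (2 * s - 1) *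
          ∑ k ∈ range n, ‖cubicExpSum (Ioc (k * m) (k * m + m)) α‖ ^ (2 * s) := by
        refine integral_mono ?_ ?_ fun α => ?_
        · simp_rw [← cubicExpSum_Ioc_zero_mul n hm]
          exact integrable_norm_cubicExpSum_pow _ _
        · exact (integrable_finsetSum _ fun k _ => integrable_norm_cubicExpSum_pow _ _).const_mul _
        · simpa using norm_sum_pow_le (range n) _ (by omega : 2 * s ≠ 0)
    _ = (n : ℝ) ^ (2 * s - 1) * ∑ k ∈ range n, (#(solutions s (Ioc (k * m) (k * m + m))) : ℝ) := by
        rw [integral_const_mul, integral_finsetSum _ fun k _ => integrable_norm_cubicExpSum_pow _ _]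
        simp_rw [integral_norm_cubicExpSum_pow]
    _ ≤ (n : ℝ) ^ (2 * s - 1) * ∑ k ∈ range n, (#(solutions s (Icc 1 m)) : ℝ) := by
        refine mul_le_mul_of_nonneg_left (sum_le_sum fun k _ => ?_) (by positivity)
        exact_mod_cast hblock k
    _ = n ^ (2 * s) * #(solutions s (Icc 1 m)) := by
        rw [sum_const, card_range, nsmul_eq_mul, ← mul_assoc, pow_sub_one_mul (by omega)]

lemma filter_modEq_subset_image (N q ξ : ℤ) (hq : 0 < q) :
    {x ∈ Icc 1 N | x ≡ ξ [ZMOD q]} ⊆ (Ioc 0 (N / q + 1)).image fun t => ξ % q - q + q * t := by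
  intro x hx
  obtain ⟨⟨hx₁, hxN⟩, hxξ⟩ := by simpa only [mem_filter, mem_Icc] using hx
  refine mem_image.2 ⟨x / q + 1, mem_Ioc.2 ⟨?_, ?_⟩, ?_⟩
  · linarith [Int.ediv_nonneg (by omega : 0 ≤ x) hq.le]
  · linarith [Int.ediv_le_ediv hq hxN]
  · have hdiv := Int.emod_add_mul_ediv x q
    rw [Int.ModEq] at hxξ
    linarith

lemma J_eq_card_solutions (s : ℕ) (Y : ℝ) : J s 3 Y = #(solutions s (Icc 1 ⌊Y⌋)) := by
  rw [J, ← Set.ncard_coe_finset]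
  congr 1
  ext ⟨x, y⟩
  simp only [Set.mem_ofPred_eq, mem_coe, mem_solutions, mem_Icc, Int.le_floor, funext_iff,
    powerSums, Fin.forall_fin_succ, IsEmpty.forall_iff, Fin.succ_zero_eq_one, Fin.succ_one_eq_two,
    Fin.val_zero, Fin.val_one, Fin.val_two, and_true]
  refine and_congr_right' (and_congr_right' ⟨fun h => ⟨h 1 le_rfl (by norm_num), h 2 (by norm_num)
    (by norm_num), h 3 (by norm_num) le_rfl⟩, fun ⟨h₁, h₂, h₃⟩ j hj₁ hj₃ => ?_⟩)
  interval_cases j <;> assumption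

lemma fgen_eq_cubicExpSum (X : ℝ) (p e : ℕ) (η : ℤ) :
    fgen X p e η = cubicExpSum {x ∈ Icc 1 ⌊X⌋ | x ≡ η [ZMOD p ^ e]} :=
  funext fun _ => (sum_filter _ _).symm

lemma integral_norm_fgen_pow_le {s : ℕ} (hs : s ≠ 0) {X M : ℝ} {p e : ℕ} (η : ℤ) (hM : 0 < M)
    (hMp : M ≤ p) (hMe : M ^ e ≤ X) :
    ∫ α in cube, ‖fgen X p e η α‖ ^ (2 * s) ≤ 2 ^ (2 * s) * J s 3 (X / M ^ e) := by
  set q : ℤ := p ^ e with hq_def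
  have hMq : M ^ e ≤ q := by rw [hq_def]; push_cast; gcongr
  have hq : 0 < q := by exact_mod_cast (pow_pos hM e).trans_le hMq
  set m := ⌊X / M ^ e⌋
  have hm : 1 ≤ m := Int.le_floor.2 (by rw [Int.cast_one, one_le_div (by positivity)]; exact hMe)
  have hNq : ⌊X⌋ / q ≤ m := by
    have hX : 0 ≤ ⌊X⌋ := Int.floor_nonneg.2 ((pow_pos hM e).le.trans hMe)
    rw [Int.le_floor, le_div_iff₀ (by positivity)]
    calc ((⌊X⌋ / q : ℤ) : ℝ) * M ^ e ≤ ((⌊X⌋ / q : ℤ) : ℝ) * q := by gcongr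
      _ ≤ ⌊X⌋ := by exact_mod_cast Int.ediv_mul_le ⌊X⌋ hq.ne'
      _ ≤ X := Int.floor_le X
  have hcard : #(solutions s {x ∈ Icc 1 ⌊X⌋ | x ≡ η [ZMOD q]}) ≤
      #(solutions s (Ioc 0 ((2 : ℕ) * m))) :=
    calc _ ≤ #(solutions s ((Ioc 0 (⌊X⌋ / q + 1)).image fun t => η % q - q + q * t)) :=
          card_le_card (solutions_mono s (filter_modEq_subset_image _ _ _ hq))
      _ ≤ #(solutions s (Ioc 0 (⌊X⌋ / q + 1))) := card_solutions_image_affine_le s hq.ne' _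
      _ ≤ _ := card_le_card (solutions_mono s (Ioc_subset_Ioc le_rfl (by push_cast; omega)))
  rw [fgen_eq_cubicExpSum, integral_norm_cubicExpSum_pow, J_eq_card_solutions]
  calc (#(solutions s {x ∈ Icc 1 ⌊X⌋ | x ≡ η [ZMOD q]}) : ℝ)
      ≤ #(solutions s (Ioc 0 ((2 : ℕ) * m))) := by exact_mod_cast hcard
    _ ≤ _ := by exact_mod_cast card_solutions_Ioc_mul_le hs 2 (by omega)

/-- Lemma 2.1: there is an absolute constant `C > 0` such that for `X, M ≥ 2`, a prime
`M < p ≤ 2M`, nonnegative integers `c, d` with `M^c ≤ X` and `M^d ≤ X`, positive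
integers `u, v` with `u + v = 6`, and integers `ξ, ζ`, one has
`∫_{[0,1)³} |𝔣_c(α;ξ)^{2u} 𝔣_d(α;ζ)^{2v}| dα ≤ C (J_{6,3}(X/M^c))^{u/6} (J_{6,3}(X/M^d))^{v/6}`. -/
theorem mixed_moment_bound :
    ∃ C : ℝ, 0 < C ∧ ∀ (X M : ℝ) (p c d u v : ℕ) (ξ ζ : ℤ),
      2 ≤ X → 2 ≤ M → p.Prime → M < (p : ℝ) → (p : ℝ) ≤ 2 * M →
      M ^ c ≤ X → M ^ d ≤ X → 0 < u → 0 < v → u + v = 6 →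
      (∫ α in cube, ‖fgen X p c ξ α‖ ^ (2 * u) * ‖fgen X p d ζ α‖ ^ (2 * v)) ≤
        C * (J 6 3 (X / M ^ c) : ℝ) ^ ((u : ℝ) / 6) *
          (J 6 3 (X / M ^ d) : ℝ) ^ ((v : ℝ) / 6) := by
  refine ⟨2 ^ 12, by norm_num, ?_⟩
  intro X M p c d u v ξ ζ _ hM _ hMp _ hMc hMd hu hv huv
  have hM₀ : 0 < M := by linarith
  have hmemLp (e : ℕ) (η : ℤ) :
      MemLp (fun α => ‖fgen X p e η α‖ ^ 2) (6 : ℕ) (volume.restrict cube) := by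
    rw [fgen_eq_cubicExpSum]; exact memLp_norm_cubicExpSum_pow _ _ _
  have hmoment {e : ℕ} (η : ℤ) (hMe : M ^ e ≤ X) :
      ∫ α in cube, (‖fgen X p e η α‖ ^ 2) ^ 6 ≤ 2 ^ 12 * (J 6 3 (X / M ^ e) : ℝ) := by
    simpa only [← pow_mul] using integral_norm_fgen_pow_le (s := 6) (by norm_num) η hM₀ hMp.le hMe
  have hexp : (u : ℝ) / 6 + v / 6 = 1 := by
    rw [← add_div, div_eq_one_iff_eq (by norm_num)]; exact_mod_cast huv
  calc ∫ α in cube, ‖fgen X p c ξ α‖ ^ (2 * u) * ‖fgen X p d ζ α‖ ^ (2 * v)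
      = ∫ α in cube, (‖fgen X p c ξ α‖ ^ 2) ^ u * (‖fgen X p d ζ α‖ ^ 2) ^ v := by
        simp_rw [pow_mul]
    _ ≤ (∫ α in cube, (‖fgen X p c ξ α‖ ^ 2) ^ 6) ^ ((u : ℝ) / (6 : ℕ)) *
          (∫ α in cube, (‖fgen X p d ζ α‖ ^ 2) ^ 6) ^ ((v : ℝ) / (6 : ℕ)) :=
        integral_pow_mul_pow_le (fun _ => by positivity) (fun _ => by positivity) hu hv huv
          (hmemLp c ξ) (hmemLp d ζ)
    _ ≤ (2 ^ 12 * (J 6 3 (X / M ^ c) : ℝ)) ^ ((u : ℝ) / 6) *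
          (2 ^ 12 * (J 6 3 (X / M ^ d) : ℝ)) ^ ((v : ℝ) / 6) := by
        push_cast
        gcongr
        exacts [hmoment ξ hMc, hmoment ζ hMd]
    _ = _ := by
        rw [Real.mul_rpow (by norm_num) (by positivity),
          Real.mul_rpow (by norm_num) (by positivity), mul_mul_mul_comm,
          ← Real.rpow_add (by norm_num), hexp, Real.rpow_one, mul_assoc]
end
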